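/- Let n be a positive integer, 1 ≤ p* ≤ 2 ≤ q ≤ ∞, and let A = diag(a_{11}, …, a_{nn}) be a real diagonal n×n matrix. Let G = (a_{ij} g_{ij}) where the g_{ij} are independent standard Gaussian random variables. Then E‖G : ℓ_{p*}^n → ℓ_q^n‖ = E max_{i≤n} |a_{ii} g_{ii}|, and consequently there exist absolute constants c, C > 0 with c · max_{i≤n} √(log(i+3)) · a_{ii}^* ≤ E‖G : ℓ_{p*}^n → ℓ_q^n‖ ≤ C · max_{i≤n} √(log(i+3)) · a_{ii}^*, where (a_{ii}^*)_{i≤n} is the decreasing rearrangement of (|a_{ii}|)_{i≤n}. -/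

import Mathlib

/-
For a diagonal matrix `D = diag(d)` and `p* ≤ q`, the operator norm `ℓ_{p*} → ℓ_q` is `max_i |d_i|`:
`‖D y‖_q ≤ max |d_i| · ‖y‖_q ≤ max |d_i| · ‖y‖_{p*}`, with equality at a unit vector. Hence the
expected norm is `E max_j a*_j |g_j|` for i.i.d. standard Gaussians `g_j`. With
`M = max_j √(log(j+4)) a*_j`, the bounds are:

* upper: `max_j a*_j |g_j| ≤ 2M + Σ_j (a*_j |g_j| - 2M)₊`, and the Gaussian moment generating
  function bounds the `j`-th expectation by `M / (j+4)²`, which sums to at most `M / 3`;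
* lower: `k+1` independent Gaussians all stay below `t = √(log(k+4)/2)` with probability at most
  `19/20`; otherwise some `a*_j |g_j|` with `j ≤ k` exceeds `a*_k t`, so by Markov's inequality
  `E max ≥ a*_k t / 20`.
-/

open MeasureTheory ProbabilityTheory Real
open scoped ENNReal

/-- The ℓ_p norm of a vector in ℝ^n, for an exponent `p ∈ [1,∞]`. -/
noncomputable def pnormE (p : ℝ≥0∞) {n : ℕ} (x : Fin n → ℝ) : ℝ :=
  if p = ∞ then ⨆ j, |x j| else (∑ j, |x j| ^ p.toReal) ^ (1 / p.toReal)

/-- The operator norm of an m×n matrix acting from ℓ_{p*}^n to ℓ_q^m,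
for exponents in `[1,∞]`. -/
noncomputable def opNormE (pstar q : ℝ≥0∞) {m n : ℕ} (M : Matrix (Fin m) (Fin n) ℝ) : ℝ :=
  ⨆ y : {y : Fin n → ℝ // pnormE pstar y ≤ 1}, pnormE q (fun i => ∑ j, M i j * y.1 j)

open scoped Matrix

section LpNorm
variable {n : ℕ} {p q : ℝ≥0∞}

lemma pnormE_nonneg (x : Fin n → ℝ) : 0 ≤ pnormE p x := by
  unfold pnormE
  split_ifs
  · exact Real.iSup_nonneg fun j => abs_nonneg _
  · positivity

lemma pnormE_le_pnormE_of_abs_le {x y : Fin n → ℝ} (h : ∀ i, |x i| ≤ |y i|) :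
    pnormE p x ≤ pnormE p y := by
  unfold pnormE
  split_ifs
  · exact ciSup_mono (Set.finite_range _).bddAbove h
  · exact Real.rpow_le_rpow (by positivity) (Finset.sum_le_sum fun i _ =>
      Real.rpow_le_rpow (abs_nonneg _) (h i) ENNReal.toReal_nonneg) (by positivity)

lemma pnormE_const_mul (hp : p ≠ 0) (c : ℝ) (x : Fin n → ℝ) :
    pnormE p (fun i => c * x i) = |c| * pnormE p x := by
  unfold pnormE
  split_ifs with hp'
  · simp only [abs_mul, Real.mul_iSup_of_nonneg (abs_nonneg c)]
  · have hr : p.toReal ≠ 0 := (ENNReal.toReal_pos hp hp').ne'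
    simp only [abs_mul, Real.mul_rpow (abs_nonneg _) (abs_nonneg _), ← Finset.mul_sum]
    rw [Real.mul_rpow (by positivity) (by positivity), one_div,
      Real.rpow_rpow_inv (abs_nonneg c) hr]

lemma pnormE_zero (hp : p ≠ 0) : pnormE p (0 : Fin n → ℝ) = 0 := by
  simpa [← Pi.zero_def] using pnormE_const_mul hp 0 (0 : Fin n → ℝ)

lemma pnormE_single (hp : p ≠ 0) (i : Fin n) (v : ℝ) : pnormE p (Pi.single i v) = |v| := by
  unfold pnormE
  split_ifs with hp'
  · have : Nonempty (Fin n) := ⟨i⟩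
    refine le_antisymm (ciSup_le fun j => ?_)
      (le_ciSup_of_le (Set.finite_range _).bddAbove i (by simp))
    rcases eq_or_ne j i with rfl | hj <;> simp [*]
  · have hr : p.toReal ≠ 0 := (ENNReal.toReal_pos hp hp').ne'
    rw [Finset.sum_eq_single i (fun j _ hj => by simp [hj, Real.zero_rpow hr]) (by simp),
      Pi.single_eq_same, one_div, Real.rpow_rpow_inv (abs_nonneg v) hr]

lemma abs_le_pnormE (hp : p ≠ 0) (x : Fin n → ℝ) (i : Fin n) : |x i| ≤ pnormE p x := by
  rw [← pnormE_single hp i (x i)]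
  refine pnormE_le_pnormE_of_abs_le fun j => ?_
  rcases eq_or_ne j i with rfl | hj <;> simp [*]

lemma rpow_sum_le_sum_rpow {ι : Type*} (s : Finset ι) (f : ι → ℝ) (hf : ∀ i ∈ s, 0 ≤ f i)
    {r : ℝ} (hr0 : 0 < r) (hr1 : r ≤ 1) :
    (∑ i ∈ s, f i) ^ r ≤ ∑ i ∈ s, f i ^ r :=
  Finset.le_sum_of_subadditive_on_pred (· ^ r) (0 ≤ ·) (Real.zero_rpow hr0.ne').le
    (fun _ _ hx hy => Real.rpow_add_le_add_rpow hx hy hr0.le hr1) (fun _ _ => add_nonneg) f hf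

lemma pnormE_le_pnormE_of_exponent_le (hp : p ≠ 0) (hpq : p ≤ q) (x : Fin n → ℝ) :
    pnormE q x ≤ pnormE p x := by
  by_cases hq : q = ∞
  · rw [pnormE, if_pos hq]
    exact Real.iSup_le (abs_le_pnormE hp x) (pnormE_nonneg x)
  have hp' : p ≠ ∞ := ne_top_of_le_ne_top hq hpq
  have hp0 : 0 < p.toReal := ENNReal.toReal_pos hp hp'
  have hpq' : p.toReal ≤ q.toReal := ENNReal.toReal_mono hq hpq
  have hq0 : 0 < q.toReal := hp0.trans_le hpq'
  rw [pnormE, if_neg hq, pnormE, if_neg hp']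
  have key : (∑ j, |x j| ^ q.toReal) ^ (p.toReal / q.toReal) ≤ ∑ j, |x j| ^ p.toReal := by
    refine (rpow_sum_le_sum_rpow _ _ (fun j _ => by positivity) (by positivity)
      ((div_le_one hq0).2 hpq')).trans_eq (Finset.sum_congr rfl fun j _ => ?_)
    rw [← Real.rpow_mul (abs_nonneg _), mul_div_cancel₀ _ hq0.ne']
  calc (∑ j, |x j| ^ q.toReal) ^ (1 / q.toReal)
      = ((∑ j, |x j| ^ q.toReal) ^ (p.toReal / q.toReal)) ^ (1 / p.toReal) := by
        rw [← Real.rpow_mul (by positivity)]; congr 1; field_simp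
    _ ≤ (∑ j, |x j| ^ p.toReal) ^ (1 / p.toReal) := by gcongr

lemma opNormE_diagonal (hp : p ≠ 0) (hpq : p ≤ q) (d : Fin n → ℝ) :
    opNormE p q (Matrix.diagonal d) = ⨆ i, |d i| := by
  have hq : q ≠ 0 := ne_bot_of_le_ne_bot hp hpq
  have hd : ∀ i, |d i| ≤ ⨆ i, |d i| := le_ciSup (Set.finite_range _).bddAbove
  have hM : 0 ≤ ⨆ i, |d i| := Real.iSup_nonneg fun i => abs_nonneg _
  have hbound : ∀ y : {y : Fin n → ℝ // pnormE p y ≤ 1},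
      pnormE q (Matrix.diagonal d *ᵥ y.1) ≤ ⨆ i, |d i| := by
    rintro ⟨y, hy⟩
    calc pnormE q (Matrix.diagonal d *ᵥ y) ≤ pnormE q (fun i => (⨆ i, |d i|) * y i) := by
          refine pnormE_le_pnormE_of_abs_le fun i => ?_
          rw [Matrix.mulVec_diagonal, abs_mul, abs_mul, abs_of_nonneg hM]
          gcongr
          exact hd i
      _ = (⨆ i, |d i|) * pnormE q y := by rw [pnormE_const_mul hq, abs_of_nonneg hM]
      _ ≤ (⨆ i, |d i|) * 1 := by gcongr; exact (pnormE_le_pnormE_of_exponent_le hp hpq y).trans hy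
      _ = ⨆ i, |d i| := mul_one _
  have : Nonempty {y : Fin n → ℝ // pnormE p y ≤ 1} :=
    ⟨⟨0, (pnormE_zero hp).trans_le zero_le_one⟩⟩
  refine le_antisymm (ciSup_le hbound) (Real.iSup_le (fun i => ?_) ?_)
  · have hy : pnormE p (Pi.single i 1) ≤ 1 := by rw [pnormE_single hp]; simp
    refine le_ciSup_of_le ⟨_, Set.forall_mem_range.2 hbound⟩ ⟨_, hy⟩ ?_
    change |d i| ≤ pnormE q (Matrix.diagonal d *ᵥ Pi.single i 1)
    have hcol : (Matrix.diagonal d).col i = Pi.single i (d i) := by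
      ext j
      rcases eq_or_ne j i with rfl | h <;> simp [*]
    rw [Matrix.mulVec_single_one, hcol, pnormE_single hq]
  · exact Real.iSup_nonneg fun y => pnormE_nonneg _

end LpNorm

lemma integral_exp_mul_gaussianReal (t : ℝ) :
    ∫ x, exp (t * x) ∂gaussianReal 0 1 = exp (t ^ 2 / 2) := by
  simpa [mgf] using congrFun (mgf_id_gaussianReal (μ := 0) (v := 1)) t

lemma integrable_abs_gaussianReal : Integrable (fun x => |x|) (gaussianReal 0 1) :=
  (memLp_one_iff_integrable.1 (memLp_id_gaussianReal 1)).abs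

lemma exp_neg_sq_div_eight_le_gaussianReal_Ioc {t : ℝ} (ht : 0 ≤ t) :
    exp (-t ^ 2) / 8 ≤ (gaussianReal 0 1).real (Set.Ioc t (t + 1)) := by
  have hexp : exp (-t ^ 2) ≤ exp 1 * exp (-(t + 1) ^ 2 / 2) := by
    rw [← exp_add]
    exact exp_le_exp.2 (by nlinarith [sq_nonneg (t - 1)])
  have hconst : exp 1 * √(2 * π) ≤ 8 := by
    have he : exp 1 ≤ 3 := exp_one_lt_d9.le.trans (by norm_num)
    have hs : √(2 * π) ≤ 2.6 := Real.sqrt_le_iff.2 ⟨by norm_num, by nlinarith [pi_lt_d2]⟩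
    nlinarith [exp_pos 1, Real.sqrt_nonneg (2 * π)]
  have hdensity : exp (-t ^ 2) / 8 ≤ gaussianPDFReal 0 1 (t + 1) := by
    have hs : 0 < √(2 * π) := by positivity
    simp only [gaussianPDFReal, NNReal.coe_one, mul_one, sub_zero]
    rw [div_le_iff₀ (by norm_num), inv_mul_eq_div, div_mul_eq_mul_div, le_div_iff₀ hs]
    nlinarith [exp_pos (-(t + 1) ^ 2 / 2)]
  have hmono : ∀ x ∈ Set.Ioc t (t + 1), gaussianPDFReal 0 1 (t + 1) ≤ gaussianPDFReal 0 1 x := by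
    rintro x ⟨htx, hxt⟩
    simp only [gaussianPDFReal, NNReal.coe_one, mul_one, sub_zero]
    gcongr
    nlinarith
  rw [measureReal_def, gaussianReal_apply_eq_integral 0 one_ne_zero,
    ENNReal.toReal_ofReal (setIntegral_nonneg measurableSet_Ioc
      fun x _ => gaussianPDFReal_nonneg 0 1 x)]
  calc exp (-t ^ 2) / 8 ≤ (volume.real (Set.Ioc t (t + 1))) • gaussianPDFReal 0 1 (t + 1) := by
        simpa using hdensity
    _ ≤ ∫ x in Set.Ioc t (t + 1), gaussianPDFReal 0 1 x :=
        setIntegral_ge_of_const_le measurableSet_Ioc (by simp) hmono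
          (integrable_gaussianPDFReal 0 1).integrableOn

lemma gaussianReal_real_abs_le_le_one_sub {t : ℝ} (ht : 0 ≤ t) :
    (gaussianReal 0 1).real {x | |x| ≤ t} ≤ 1 - exp (-t ^ 2) / 8 := by
  have hdisj : Disjoint {x : ℝ | |x| ≤ t} (Set.Ioc t (t + 1)) :=
    Set.disjoint_left.2 fun x hx hx' => ((le_abs_self x).trans hx).not_gt hx'.1
  have hunion := measureReal_union (μ := gaussianReal 0 1) hdisj measurableSet_Ioc
  linarith [exp_neg_sq_div_eight_le_gaussianReal_Ioc ht,
    measureReal_le_one (μ := gaussianReal 0 1) (s := {x : ℝ | |x| ≤ t} ∪ Set.Ioc t (t + 1))]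

lemma gaussianReal_real_abs_le_sqrt_log_pow_le {m : ℕ} (hm : 0 < m) :
    (gaussianReal 0 1).real {x | |x| ≤ √(log (m + 3) / 2)} ^ m ≤ 19 / 20 := by
  have hm' : (1 : ℝ) ≤ m := Nat.one_le_cast.2 hm
  have ht2 : √(log (m + 3) / 2) ^ 2 = log (m + 3) / 2 :=
    Real.sq_sqrt (div_nonneg (log_nonneg (by linarith)) zero_le_two)
  have hsqrt : √((m : ℝ) + 3) ≤ 2 * m := Real.sqrt_le_iff.2 ⟨by positivity, by nlinarith⟩
  have htail : 1 / (16 * m) ≤ exp (-√(log (m + 3) / 2) ^ 2) / 8 := by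
    rw [ht2, exp_neg, exp_half, exp_log (by positivity)]
    calc 1 / (16 * (m : ℝ)) = (2 * (m : ℝ))⁻¹ / 8 := by field_simp; norm_num
      _ ≤ (√((m : ℝ) + 3))⁻¹ / 8 := by gcongr
  have hF := (gaussianReal_real_abs_le_le_one_sub (Real.sqrt_nonneg (log (m + 3) / 2))).trans
    (sub_le_sub_left htail 1)
  calc (gaussianReal 0 1).real {x | |x| ≤ √(log (m + 3) / 2)} ^ m
      ≤ (1 - 1 / (16 * m)) ^ m := pow_le_pow_left₀ measureReal_nonneg hF m
    _ ≤ exp (-(1 / (16 * m))) ^ m :=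
        pow_le_pow_left₀ (by rw [sub_nonneg, div_le_one (by positivity)]; linarith)
          (one_sub_le_exp_neg _) m
    _ = exp (-(1 / 16)) := by rw [← exp_nat_mul]; congr 1; field_simp
    _ ≤ 19 / 20 := by
        rw [exp_neg, inv_le_comm₀ (exp_pos _) (by norm_num)]
        linarith [add_one_le_exp (1 / 16 : ℝ)]

lemma max_zero_le_exp_mul_div {l : ℝ} (hl : 0 < l) (y : ℝ) : max y 0 ≤ exp (l * y) / l := by
  refine max_le ?_ (by positivity)
  rw [le_div_iff₀ hl]
  linarith [add_one_le_exp (l * y), mul_comm y l]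

lemma integral_max_mul_abs_sub_le {l : ℝ} (hl : 0 < l) (b s : ℝ) :
    ∫ x, max (b * |x| - s) 0 ∂gaussianReal 0 1 ≤ 2 / l * exp (l ^ 2 * b ^ 2 / 2 - l * s) := by
  set F : ℝ → ℝ := fun x => exp (-(l * s)) / l * (exp ((l * b) * x) + exp ((-(l * b)) * x))
  have hF_int : Integrable F (gaussianReal 0 1) :=
    ((integrable_exp_mul_gaussianReal _).add (integrable_exp_mul_gaussianReal _)).const_mul _
  have hpt : ∀ x, max (b * |x| - s) 0 ≤ F x := by
    intro x
    refine (max_zero_le_exp_mul_div hl _).trans ?_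
    have habs : exp (l * b * |x|) ≤ exp (l * b * x) + exp (-(l * b) * x) := by
      rcases abs_cases x with ⟨h, _⟩ | ⟨h, _⟩ <;> rw [h]
      · linarith [exp_pos (-(l * b) * x)]
      · rw [mul_neg, ← neg_mul]; linarith [exp_pos (l * b * x)]
    calc exp (l * (b * |x| - s)) / l = exp (-(l * s)) / l * exp (l * b * |x|) := by
          rw [div_mul_eq_mul_div, ← exp_add]; ring_nf
      _ ≤ F x := mul_le_mul_of_nonneg_left habs (by positivity)
  calc ∫ x, max (b * |x| - s) 0 ∂gaussianReal 0 1 ≤ ∫ x, F x ∂gaussianReal 0 1 := by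
        refine integral_mono (hF_int.mono' (by fun_prop) (ae_of_all _ fun x => ?_)) hF_int hpt
        rw [Real.norm_of_nonneg (le_max_right _ _)]
        exact hpt x
    _ = 2 / l * exp (l ^ 2 * b ^ 2 / 2 - l * s) := by
        rw [integral_const_mul, integral_add (integrable_exp_mul_gaussianReal _)
          (integrable_exp_mul_gaussianReal _), integral_exp_mul_gaussianReal,
          integral_exp_mul_gaussianReal, exp_sub, exp_neg, neg_sq, mul_pow]
        ring

lemma integral_max_mul_abs_sub_two_mul_le {L M b : ℝ} (hL : 1 ≤ L) (hM : 0 < M)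
    (hbL : L * b ^ 2 ≤ M ^ 2) :
    ∫ x, max (b * |x| - 2 * M) 0 ∂gaussianReal 0 1 ≤ M * exp (-(2 * L)) := by
  have hcoef : 2 / (2 * L / M) ≤ M := by
    rw [div_div_eq_mul_div, div_le_iff₀ (by positivity)]
    nlinarith
  have hexponent : (2 * L / M) ^ 2 * b ^ 2 / 2 - 2 * L / M * (2 * M) ≤ -(2 * L) := by
    have hratio : L * b ^ 2 / M ^ 2 ≤ 1 := (div_le_one (by positivity)).2 hbL
    have : (2 * L / M) ^ 2 * b ^ 2 / 2 - 2 * L / M * (2 * M)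
        = 2 * L * (L * b ^ 2 / M ^ 2) - 4 * L := by
      field_simp
      ring
    nlinarith
  calc ∫ x, max (b * |x| - 2 * M) 0 ∂gaussianReal 0 1
      ≤ 2 / (2 * L / M) * exp ((2 * L / M) ^ 2 * b ^ 2 / 2 - 2 * L / M * (2 * M)) :=
        integral_max_mul_abs_sub_le (by positivity) _ _
    _ ≤ M * exp (-(2 * L)) := by gcongr

lemma sum_range_inv_add_four_sq_le (n : ℕ) :
    ∑ j ∈ Finset.range n, (((j : ℝ) + 1 + 3) ^ 2)⁻¹ ≤ 1 / 3 - 1 / ((n : ℝ) + 3) := by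
  induction n with
  | zero => norm_num
  | succ n ih =>
    have hstep : (((n : ℝ) + 1 + 3) ^ 2)⁻¹ ≤ 1 / ((n : ℝ) + 3) - 1 / ((n : ℝ) + 1 + 3) := by
      rw [div_sub_div _ _ (by positivity) (by positivity), ← one_div,
        div_le_div_iff₀ (by positivity) (by positivity)]
      nlinarith
    rw [Finset.sum_range_succ]
    push_cast
    linarith

lemma iSup_le_add_sum_max_sub {ι : Type*} [Fintype ι] (f : ι → ℝ) {s : ℝ} (hs : 0 ≤ s) :
    ⨆ i, f i ≤ s + ∑ i, max (f i - s) 0 := by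
  have hsum : 0 ≤ ∑ i, max (f i - s) 0 := Finset.sum_nonneg fun i _ => le_max_right _ _
  refine Real.iSup_le (fun i => ?_) (by linarith)
  have := Finset.single_le_sum (fun j _ => le_max_right (f j - s) 0) (Finset.mem_univ i)
  linarith [le_max_left (f i - s) 0]

section RandomVariables
variable {Ω : Type*} [MeasurableSpace Ω] {μ : Measure Ω}

lemma ProbabilityTheory.HasLaw.integrable_comp {𝓧 : Type*} [MeasurableSpace 𝓧] {X : Ω → 𝓧}
    {ν : Measure 𝓧} (hX : HasLaw X ν μ) {f : 𝓧 → ℝ} (hf : Integrable f ν) :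
    Integrable (fun ω => f (X ω)) μ :=
  (hX.map_eq ▸ hf).comp_aemeasurable hX.aemeasurable

lemma ProbabilityTheory.iIndepFun.measureReal_biInter_preimage_eq_pow {ι 𝓧 : Type*}
    [MeasurableSpace 𝓧] {X : ι → Ω → 𝓧} {ν : Measure 𝓧} (hind : iIndepFun X μ)
    (hlaw : ∀ i, HasLaw (X i) ν μ) (S : Finset ι) {s : Set 𝓧} (hs : MeasurableSet s) :
    μ.real (⋂ i ∈ S, X i ⁻¹' s) = ν.real s ^ S.card := by
  rw [measureReal_def, hind.measure_inter_preimage_eq_mul S (fun _ _ => hs),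
    Finset.prod_congr rfl fun i _ => by
      rw [← Measure.map_apply_of_aemeasurable (hlaw i).aemeasurable hs, (hlaw i).map_eq],
    Finset.prod_const, ENNReal.toReal_pow, measureReal_def]

lemma integrable_iSup_mul_abs {ι : Type*} [Fintype ι] {X : ι → Ω → ℝ}
    (hlaw : ∀ i, HasLaw (X i) (gaussianReal 0 1) μ) {b : ι → ℝ} (hb : ∀ i, 0 ≤ b i) :
    Integrable (fun ω => ⨆ i, b i * |X i ω|) μ := by
  refine Integrable.mono' (integrable_finsetSum Finset.univ fun i _ =>
      ((hlaw i).integrable_comp integrable_abs_gaussianReal).const_mul (b i))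
    (AEMeasurable.iSup fun i => ((hlaw i).aemeasurable.abs.const_mul (b i))).aestronglyMeasurable
    (ae_of_all _ fun ω => ?_)
  rw [Real.norm_of_nonneg (Real.iSup_nonneg fun i => mul_nonneg (hb i) (abs_nonneg _))]
  exact Real.iSup_le (fun i => Finset.single_le_sum (f := fun i => b i * |X i ω|)
    (fun j _ => mul_nonneg (hb j) (abs_nonneg _)) (Finset.mem_univ i))
    (Finset.sum_nonneg fun j _ => mul_nonneg (hb j) (abs_nonneg _))

variable [IsProbabilityMeasure μ]

lemma sqrt_log_mul_le_integral_iSup_mul_abs {n : ℕ} {X : Fin n → Ω → ℝ}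
    (hlaw : ∀ i, HasLaw (X i) (gaussianReal 0 1) μ) (hind : iIndepFun X μ) {b : Fin n → ℝ}
    (hb : Antitone b) (hb0 : ∀ i, 0 ≤ b i) (k : Fin n) :
    √(log ((k : ℕ) + 1 + 3)) * b k ≤ 30 * ∫ ω, ⨆ i, b i * |X i ω| ∂μ := by
  set t := √(log ((k : ℕ) + 1 + 3) / 2)
  set A := ⋂ i ∈ Finset.Iic k, X i ⁻¹' {x | |x| ≤ t}
  have hA : μ.real A ≤ 19 / 20 := by
    have := gaussianReal_real_abs_le_sqrt_log_pow_le (Nat.succ_pos k)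
    push_cast at this
    rwa [hind.measureReal_biInter_preimage_eq_pow hlaw _ (measurableSet_le measurable_abs
      measurable_const), Fin.card_Iic]
  have hcover : Set.univ ⊆ A ∪ {ω | b k * t ≤ ⨆ i, b i * |X i ω|} := by
    intro ω _
    by_contra hω
    simp only [A, Set.mem_union, Set.mem_iInter, Set.mem_preimage, Set.mem_ofPred_eq, not_or,
      not_forall, not_le] at hω
    obtain ⟨⟨i, hik, hti⟩, hlt⟩ := hω
    refine hlt.not_ge (le_ciSup_of_le (Set.finite_range _).bddAbove i ?_)
    exact mul_le_mul (hb (Finset.mem_Iic.1 hik)) hti.le (Real.sqrt_nonneg _) (hb0 i)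
  have hprob : 1 / 20 ≤ μ.real {ω | b k * t ≤ ⨆ i, b i * |X i ω|} := by
    have := (measureReal_mono hcover).trans (measureReal_union_le (μ := μ) A _)
    rw [probReal_univ] at this
    linarith
  have hmarkov := mul_meas_ge_le_integral_of_nonneg
    (ae_of_all _ fun ω => Real.iSup_nonneg fun i => mul_nonneg (hb0 i) (abs_nonneg (X i ω)))
    (integrable_iSup_mul_abs hlaw hb0) (b k * t)
  have hsqrt : √(log ((k : ℕ) + 1 + 3)) ≤ 3 / 2 * t := by
    rw [show log ((k : ℕ) + 1 + 3) = 2 * (log ((k : ℕ) + 1 + 3) / 2) by ring,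
      Real.sqrt_mul zero_le_two]
    gcongr
    exact Real.sqrt_le_iff.2 ⟨by norm_num, by norm_num⟩
  have hbt : 0 ≤ b k * t := mul_nonneg (hb0 k) (Real.sqrt_nonneg _)
  nlinarith [mul_le_mul_of_nonneg_right hsqrt (hb0 k), mul_le_mul_of_nonneg_left hprob hbt]

lemma integral_iSup_mul_abs_le {n : ℕ} {X : Fin n → Ω → ℝ}
    (hlaw : ∀ i, HasLaw (X i) (gaussianReal 0 1) μ) {b : Fin n → ℝ} (hb0 : ∀ i, 0 ≤ b i) :
    ∫ ω, ⨆ i, b i * |X i ω| ∂μ ≤ 3 * ⨆ i : Fin n, √(log ((i : ℕ) + 1 + 3)) * b i := by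
  set M := ⨆ i : Fin n, √(log ((i : ℕ) + 1 + 3)) * b i
  have hlog : ∀ i : Fin n, 1 ≤ log ((i : ℕ) + 1 + 3) := fun i => by
    rw [le_log_iff_exp_le (by positivity)]
    linarith [exp_one_lt_d9, (Nat.cast_nonneg i : (0 : ℝ) ≤ (i : ℕ))]
  have hbM : ∀ i : Fin n, √(log ((i : ℕ) + 1 + 3)) * b i ≤ M :=
    le_ciSup (Set.finite_range _).bddAbove
  rcases (Real.iSup_nonneg fun i => mul_nonneg (Real.sqrt_nonneg _) (hb0 i) : 0 ≤ M).eq_or_lt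
    with hM | hM
  · have hb : ∀ i, b i = 0 := fun i => by
      nlinarith [hbM i, Real.one_le_sqrt.2 (hlog i), hb0 i]
    simp only [hb, zero_mul, iSup_const_zero, integral_zero]
    exact mul_nonneg zero_le_three hM.le
  have htail : ∀ i : Fin n,
      ∫ ω, max (b i * |X i ω| - 2 * M) 0 ∂μ ≤ M * ((((i : ℕ) : ℝ) + 1 + 3) ^ 2)⁻¹ := by
    intro i
    have hbL : log ((i : ℕ) + 1 + 3) * b i ^ 2 ≤ M ^ 2 := by
      have := pow_le_pow_left₀ (mul_nonneg (Real.sqrt_nonneg _) (hb0 i)) (hbM i) 2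
      rwa [mul_pow, Real.sq_sqrt (zero_le_one.trans (hlog i))] at this
    have hexp : exp (-(2 * log ((i : ℕ) + 1 + 3))) = ((((i : ℕ) : ℝ) + 1 + 3) ^ 2)⁻¹ := by
      rw [exp_neg, two_mul, exp_add, exp_log (by positivity), sq]
    calc ∫ ω, max (b i * |X i ω| - 2 * M) 0 ∂μ
        = ∫ x, max (b i * |x| - 2 * M) 0 ∂gaussianReal 0 1 :=
          (hlaw i).integral_comp (f := fun x => max (b i * |x| - 2 * M) 0) (by fun_prop)
      _ ≤ M * ((((i : ℕ) : ℝ) + 1 + 3) ^ 2)⁻¹ := by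
          rw [← hexp]
          exact integral_max_mul_abs_sub_two_mul_le (hlog i) hM hbL
  have hint : ∀ i ∈ Finset.univ, Integrable (fun ω => max (b i * |X i ω| - 2 * M) 0) μ :=
    fun i _ => (hlaw i).integrable_comp
      (((integrable_abs_gaussianReal.const_mul (b i)).sub (integrable_const _)).sup
        (integrable_const 0))
  have hsum : ∑ i : Fin n, ((((i : ℕ) : ℝ) + 1 + 3) ^ 2)⁻¹ ≤ 1 / 3 := by
    rw [Fin.sum_univ_eq_sum_range (fun j => (((j : ℝ) + 1 + 3) ^ 2)⁻¹)]
    linarith [sum_range_inv_add_four_sq_le n, one_div_pos.2 (by positivity : (0 : ℝ) < n + 3)]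
  calc ∫ ω, ⨆ i, b i * |X i ω| ∂μ
      ≤ ∫ ω, (2 * M + ∑ i, max (b i * |X i ω| - 2 * M) 0) ∂μ :=
        integral_mono (integrable_iSup_mul_abs hlaw hb0)
          ((integrable_const _).add (integrable_finsetSum _ hint))
          fun ω => iSup_le_add_sum_max_sub _ (by positivity)
    _ = 2 * M + ∑ i, ∫ ω, max (b i * |X i ω| - 2 * M) 0 ∂μ := by
        rw [integral_add (integrable_const _) (integrable_finsetSum _ hint), integral_const,
          integral_finsetSum _ hint, probReal_univ, one_smul]
    _ ≤ 2 * M + ∑ i : Fin n, M * ((((i : ℕ) : ℝ) + 1 + 3) ^ 2)⁻¹ := by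
        gcongr with i
        exact htail i
    _ ≤ 3 * M := by
        rw [← Finset.mul_sum]
        nlinarith
end RandomVariables

theorem diagonal_case :
    ∃ c C : ℝ, 0 < c ∧ 0 < C ∧
      ∀ (n : ℕ), 0 < n →
      ∀ (pstar q : ℝ≥0∞), 1 ≤ pstar → pstar ≤ 2 → 2 ≤ q →
      ∀ (a : Fin n → ℝ)
        (Ω : Type) (_ : MeasurableSpace Ω) (μ : Measure Ω) (_ : IsProbabilityMeasure μ)
        (g : Fin n × Fin n → Ω → ℝ),
        (∀ ij, Measurable (g ij)) →
        (∀ ij, μ.map (g ij) = gaussianReal 0 1) →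
        iIndepFun g μ →
        -- `astar` is the decreasing rearrangement of `(|a i|)`
        ∀ (astar : Fin n → ℝ) (σ : Equiv.Perm (Fin n)),
          Antitone astar → (∀ i, astar i = |a (σ i)|) →
          (∫ ω, opNormE pstar q
              (fun i j => (if i = j then a i else 0) * g (i, j) ω) ∂μ)
            = (∫ ω, ⨆ i, |a i * g (i, i) ω| ∂μ) ∧
          c * (⨆ i : Fin n, Real.sqrt (Real.log ((i : ℕ) + 1 + 3)) * astar i)
            ≤ (∫ ω, opNormE pstar q
                (fun i j => (if i = j then a i else 0) * g (i, j) ω) ∂μ) ∧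
          (∫ ω, opNormE pstar q
              (fun i j => (if i = j then a i else 0) * g (i, j) ω) ∂μ)
            ≤ C * ⨆ i : Fin n, Real.sqrt (Real.log ((i : ℕ) + 1 + 3)) * astar i := by
  refine ⟨1 / 30, 3, by norm_num, by norm_num, ?_⟩
  intro n _ pstar q hp1 hp2 hq2 a Ω _ μ _ g hg hmap hind astar σ hanti hastar
  have hnorm : ∀ ω, opNormE pstar q (fun i j => (if i = j then a i else 0) * g (i, j) ω)
      = ⨆ i, |a i * g (i, i) ω| := fun ω => by
    rw [← opNormE_diagonal (zero_lt_one.trans_le hp1).ne' (hp2.trans hq2)]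
    congr
    ext i j
    rw [Matrix.diagonal_apply]
    split_ifs with h <;> simp [h]
  have hrearrange : ∀ ω, ⨆ i, |a i * g (i, i) ω| = ⨆ j, astar j * |g (σ j, σ j) ω| := fun ω => by
    rw [← σ.iSup_comp]
    simp only [hastar, abs_mul]
  have hlaw : ∀ j, HasLaw (g (σ j, σ j)) (gaussianReal 0 1) μ :=
    fun j => ⟨(hg _).aemeasurable, hmap _⟩
  have hindep : iIndepFun (fun j => g (σ j, σ j)) μ :=
    hind.precomp fun i j hij => σ.injective (congrArg Prod.fst hij)
  have hastar0 : ∀ j, 0 ≤ astar j := fun j => (hastar j).symm ▸ abs_nonneg _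
  simp only [hnorm, hrearrange, true_and]
  refine ⟨?_, integral_iSup_mul_abs_le hlaw hastar0⟩
  rw [Real.mul_iSup_of_nonneg (by norm_num)]
  refine Real.iSup_le (fun k => ?_) (integral_nonneg fun ω =>
    Real.iSup_nonneg fun j => mul_nonneg (hastar0 j) (abs_nonneg _))
  linarith [sqrt_log_mul_le_integral_iSup_mul_abs hlaw hindep hanti hastar0 k]
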